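/- arXiv:1005.0938 — 5 statements merged into one kernel-verified Lean document; each statement's English description precedes it below -/
import Mathlib

section
/- Let H : Set → Set be an ω^op-continuous endofunctor, M = (M, m, u) a monad on Set such that H admits a lifting H̃ to the Eilenberg–Moore category Alg(M) which is ω-cocontinuous, and such that the free algebra M0 on the empty set is a terminal object of Alg(M) (M0 = 1). Then the final H-coalgebra L is the Cauchy completion of (the image in L of) the initial H̃-algebra I with respect to the ultrametric d(x,y) = 2^{-n}, n minimal with p_n(x) ≠ p_n(y); precisely: L is Cauchy complete under this ultrametric, and the image of the canonical M-algebra map f : I → L is dense in L. -/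
/-!
Distance below `2⁻ᵏ` means agreement at level `k`. A Cauchy sequence in `L` is therefore
eventually constant in each coordinate, and these eventual values form a point of `L`, its limit.
A point `x` is approximated to level `k` by `f (i_k (p_k x))`, because `p_k ∘ f ∘ i_k = id`.
-/

open CategoryTheory

universe u

namespace OnCoalgebrasOverAlgebras

/-- A distributive law `λ : MH ⟶ HM` of a monad `M` on `Set` over an endofunctor `H`,
equivalently (the data of) a lifting `H̃` of `H` to the Eilenberg–Moore category of `M`:
it satisfies `λ ∘ u_H = Hu` and `λ ∘ m_H = Hm ∘ λ_M ∘ Mλ`. -/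
structure DistLaw (M : Monad (Type u)) (H : Type u ⥤ Type u) where
  app : ∀ X : Type u, M.toFunctor.obj (H.obj X) → H.obj (M.toFunctor.obj X)
  naturality : ∀ {X Y : Type u} (f : X → Y) (z : M.toFunctor.obj (H.obj X)),
    app Y (M.toFunctor.map (H.map (TypeCat.ofHom f)) z) = H.map (M.toFunctor.map (TypeCat.ofHom f)) (app X z)
  unit : ∀ (X : Type u) (z : H.obj X),
    app X (M.η.app (H.obj X) z) = H.map (M.η.app X) z
  mul : ∀ (X : Type u) (z : M.toFunctor.obj (M.toFunctor.obj (H.obj X))),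
    app X (M.μ.app (H.obj X) z)
      = H.map (M.μ.app X) (app (M.toFunctor.obj X) (M.toFunctor.map (TypeCat.ofHom (app X)) z))

/-- The terminal sequence `1, H1, H²1, …` of an endofunctor `H` on `Set`. -/
def TObj (H : Type u ⥤ Type u) : ℕ → Type u
  | 0 => PUnit
  | n + 1 => H.obj (TObj H n)

/-- The connecting maps `Hⁿt : H^{n+1}1 → Hⁿ1` of the terminal sequence,
where `t : H1 → 1` is the unique map. -/
def TMap (H : Type u ⥤ Type u) : ∀ n : ℕ, TObj H (n + 1) → TObj H n
  | 0 => fun _ => PUnit.unit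
  | n + 1 => H.map (TypeCat.ofHom (TMap H n))

/-- The limit `L = {(x_n) | Hⁿt (x_{n+1}) = x_n}` of the terminal sequence of `H`. -/
def L (H : Type u ⥤ Type u) : Type u :=
  { x : ∀ n, TObj H n // ∀ n, TMap H n (x (n + 1)) = x n }

/-- The limit projections `p_n : L → Hⁿ1`. -/
def pr (H : Type u ⥤ Type u) (n : ℕ) : L H → TObj H n := fun x => x.1 n

/-- The `M`-algebra structures `a_n : MHⁿ1 → Hⁿ1` on the terminal sequence,
defined by `a₀ : M1 → 1` the unique map and `a_{n+1} = H a_n ∘ λ_{Hⁿ1}`. -/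
def aStr {M : Monad (Type u)} {H : Type u ⥤ Type u} (l : DistLaw M H) :
    ∀ n : ℕ, M.toFunctor.obj (TObj H n) → TObj H n
  | 0 => fun _ => PUnit.unit
  | n + 1 => fun z => H.map (TypeCat.ofHom (aStr l n)) (l.app (TObj H n) z)

/-- The cone `α_n : C → Hⁿ1` over the terminal sequence induced by an `H`-coalgebra
structure `c : C → HC`; `α₀` is the unique map and `α_{n+1} = Hα_n ∘ c`. -/
def alphaCone (H : Type u ⥤ Type u) {C : Type u} (c : C → H.obj C) :
    ∀ n : ℕ, C → TObj H n
  | 0 => fun _ => PUnit.unit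
  | n + 1 => fun z => H.map (TypeCat.ofHom (alphaCone H c n)) (c z)

open Classical in
/-- The canonical ultrametric on the limit `L` of the terminal sequence:
`d(x,y) = 2^{-n}` with `n` least such that `p_n x ≠ p_n y`, and `d(x,y) = 0` if `x = y`. -/
noncomputable def dL (H : Type u ⥤ Type u) (x y : L H) : ℝ :=
  if x = y then 0 else (2⁻¹ : ℝ) ^ sInf { n : ℕ | x.1 n ≠ y.1 n }

/-- The maps `Hⁿ! : Hⁿ1 → H^{n+1}1` generated by a map `! : 1 → H1`
(under `M0 = 1`, the unique algebra map out of the initial algebra `M0`). -/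
def Emb (H : Type u ⥤ Type u) (e : TObj H 0 → TObj H 1) :
    ∀ n : ℕ, TObj H n → TObj H (n + 1)
  | 0 => e
  | n + 1 => H.map (TypeCat.ofHom (Emb H e n))

private lemma mapmap (F : Type u ⥤ Type u) {X Y Z : Type u} (f : X → Y) (g : Y → Z)
    (x : F.obj X) : F.map (TypeCat.ofHom g) (F.map (TypeCat.ofHom f) x)
      = F.map (TypeCat.ofHom (fun w => g (f w))) x := by
  rw [← Functor.map_comp_apply]
  rfl

/-- The lifting `H̃` of `H` to the Eilenberg–Moore category `Alg(M)` determined by a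
distributive law `λ : MH ⟶ HM`: it sends an algebra `(X, x)` to `(HX, Hx ∘ λ_X)`
and satisfies `U^M ∘ H̃ = H ∘ U^M`. -/
def liftF (M : Monad (Type u)) (H : Type u ⥤ Type u) (l : DistLaw M H) :
    M.Algebra ⥤ M.Algebra where
  obj A :=
    { A := H.obj A.A
      a := TypeCat.ofHom (fun z => H.map A.a (l.app A.A z))
      unit := by
        ext z
        change H.map A.a (l.app A.A (M.η.app (H.obj A.A) z)) = z
        rw [l.unit A.A z, ← Functor.map_comp_apply, A.unit]
        simp
      assoc := by
        ext z
        change H.map A.a (l.app A.A (M.μ.app (H.obj A.A) z))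
          = H.map A.a (l.app A.A (M.toFunctor.map (TypeCat.ofHom (l.app A.A) ≫ H.map A.a) z))
        rw [Functor.map_comp_apply]
        have hn := l.naturality (⇑A.a) (M.toFunctor.map (TypeCat.ofHom (l.app A.A)) z)
        rw [TypeCat.ofHom_eq] at hn
        rw [hn, l.mul A.A z, ← Functor.map_comp_apply, ← Functor.map_comp_apply,
          A.assoc] }
  map := fun {A B} f =>
    { f := H.map f.f
      h := by
        ext z
        change H.map B.a (l.app B.A (M.toFunctor.map (H.map f.f) z))
          = H.map f.f (H.map A.a (l.app A.A z))
        have hn := l.naturality (⇑f.f) z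
        rw [TypeCat.ofHom_eq] at hn
        rw [hn, ← Functor.map_comp_apply, ← Functor.map_comp_apply, f.h] }
  map_id A := by
    apply Monad.Algebra.Hom.ext
    show H.map (𝟙 A.A) = 𝟙 (H.obj A.A)
    simp
  map_comp f g := by
    apply Monad.Algebra.Hom.ext
    show H.map (f.f ≫ g.f) = _
    rw [H.map_comp]
    rfl

section

variable {H : Type u ⥤ Type u}

theorem L.val_eq_of_le {x y : L H} {k : ℕ} (h : x.1 k = y.1 k) {j : ℕ} (hj : j ≤ k) :
    x.1 j = y.1 j := by
  induction hj using Nat.decreasingInduction with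
  | self => exact h
  | of_succ m _ ih => rw [← x.2 m, ← y.2 m, ih]

-- Agreement at level `k` forces agreement at every lower level, via the connecting maps.
theorem dL_lt_pow_iff {x y : L H} {k : ℕ} : dL H x y < (2⁻¹ : ℝ) ^ k ↔ x.1 k = y.1 k := by
  by_cases hxy : x = y
  · subst hxy
    simp [dL]
  have hne : {n : ℕ | x.1 n ≠ y.1 n}.Nonempty := by
    by_contra hempty
    exact hxy (Subtype.ext (funext fun n => by
      by_contra hn
      exact hempty ⟨n, hn⟩))
  rw [dL, if_neg hxy, pow_lt_pow_iff_right_of_lt_one₀ (by norm_num) (by norm_num)]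
  constructor
  · intro hk
    exact not_not.mp (Nat.notMem_of_lt_sInf hk)
  · intro hk
    by_contra hle
    exact Nat.sInf_mem hne (L.val_eq_of_le hk (not_lt.mp hle))

theorem L.exists_forall_val_eq_of_eventually_const (x : ℕ → L H) (N : ℕ → ℕ)
    (hN : ∀ k m, N k ≤ m → (x m).1 k = (x (N k)).1 k) :
    ∃ y : L H, ∀ k m, N k ≤ m → (x m).1 k = y.1 k := by
  have compat : ∀ k, TMap H k ((x (N (k + 1))).1 (k + 1)) = (x (N k)).1 k := by
    intro k
    set m := max (N k) (N (k + 1))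
    rw [← hN (k + 1) m (le_max_right _ _), (x m).2 k, hN k m (le_max_left _ _)]
  exact ⟨⟨fun k => (x (N k)).1 k, compat⟩, hN⟩

end

theorem final_coalgebra_is_completion_of_initial_algebra_general
    (H : Type u ⥤ Type u)
    -- the initial `H̃`-algebra `I`: an `M`-algebra `(I, ζ)` …
    (I : Type u)
    -- … with a cocone `i_n : HⁿM0 = Hⁿ1 → I` of `M`-algebra morphisms …
    (i : ∀ n : ℕ, TObj H n → I)
    -- the canonical `M`-algebra map `f : I → L` with `p_n ∘ f ∘ i_n = Hⁿs = id`
    (f : I → L H)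
    (hfi : ∀ (n : ℕ) (x : TObj H n), pr H n (f (i n x)) = x) :
    -- `L` is Cauchy complete under the ultrametric `dL` …
    (∀ x : ℕ → L H,
      (∀ ε : ℝ, 0 < ε → ∃ N : ℕ, ∀ m n : ℕ, N ≤ m → N ≤ n → dL H (x m) (x n) < ε) →
      ∃ y : L H, ∀ ε : ℝ, 0 < ε → ∃ N : ℕ, ∀ n : ℕ, N ≤ n → dL H (x n) y < ε) ∧
    -- … and the image of `f : I → L` is dense in `L`
    (∀ (x : L H) (ε : ℝ), 0 < ε → ∃ w : I, dL H x (f w) < ε) := by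
  have small_pow {ε : ℝ} (hε : 0 < ε) : ∃ k : ℕ, (2⁻¹ : ℝ) ^ k < ε :=
    exists_pow_lt_of_lt_one hε (by norm_num)
  constructor
  · intro x hx
    choose N hN using fun k : ℕ => hx ((2⁻¹ : ℝ) ^ k) (by positivity)
    obtain ⟨y, hy⟩ := L.exists_forall_val_eq_of_eventually_const x N
      fun k m hm => dL_lt_pow_iff.mp (hN k m (N k) hm le_rfl)
    refine ⟨y, fun ε hε => ?_⟩
    obtain ⟨k, hk⟩ := small_pow hε
    exact ⟨N k, fun n hn => (dL_lt_pow_iff.mpr (hy k n hn)).trans hk⟩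
  · intro x ε hε
    obtain ⟨k, hk⟩ := small_pow hε
    exact ⟨i k (x.1 k), (dL_lt_pow_iff.mpr (hfi k (x.1 k)).symm).trans hk⟩

/-- **Theorem 1.** Let `H : Set → Set` be an `ω^op`-continuous
endofunctor and `M` a monad on `Set` such that `H` admits a lifting `H̃` to `Alg(M)`
which is `ω`-cocontinuous, and such that `M0 = 1` in `Alg(M)`.  Then the final
`H`-coalgebra `L` is the Cauchy completion of (the image in `L` of) the initial
`H̃`-algebra `I` with respect to the ultrametric `d(x,y) = 2^{-n}`, `n` minimal with
`p_n x ≠ p_n y`: `L` is Cauchy complete under this ultrametric and the image of the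
canonical `M`-algebra map `f : I → L` is dense in `L`. -/
theorem final_coalgebra_is_completion_of_initial_algebra
    (M : Monad (Type u)) (H : Type u ⥤ Type u)
    -- `H` is `ω^op`-continuous
    [Limits.PreservesLimitsOfShape ℕᵒᵖ H]
    -- `H` admits a lifting `H̃` to `Alg(M)`, which is `ω`-cocontinuous
    (l : DistLaw M H)
    [Limits.PreservesColimitsOfShape ℕ (liftF M H l)]
    -- `M0 = 1` in `Alg(M)`: the free algebra on the empty set is a singleton
    (h0 : Subsingleton (M.toFunctor.obj PEmpty))
    (h1 : Nonempty (M.toFunctor.obj PEmpty))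
    -- the final coalgebra structure `ξ : L ≅ HL` obtained from the limit
    (ξ : L H → H.obj (L H)) (hbij : Function.Bijective ξ)
    (hξ : ∀ (n : ℕ) (x : L H), pr H (n + 1) x = H.map (TypeCat.ofHom (pr H n)) (ξ x))
    -- the `M`-algebra structure `γ : ML → L`, the unique coalgebra map from `(ML, λ_L ∘ Mξ)`
    (γ : M.toFunctor.obj (L H) → L H)
    (hγ : ∀ z, ξ (γ z) = H.map (TypeCat.ofHom γ) (l.app (L H) (M.toFunctor.map (TypeCat.ofHom ξ) z)))
    -- the unique algebra map `! : 1 = M0 → HM0 = H1`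
    (e : TObj H 0 → TObj H 1)
    (he : ∀ z, e (aStr l 0 z) = aStr l 1 (M.toFunctor.map (TypeCat.ofHom e) z))
    -- the initial `H̃`-algebra `I`: an `M`-algebra `(I, ζ)` …
    (I : Type u) (ζ : M.toFunctor.obj I → I)
    (hζu : ∀ z, ζ (M.η.app I z) = z)
    (hζm : ∀ z, ζ (M.μ.app I z) = ζ (M.toFunctor.map (TypeCat.ofHom ζ) z))
    -- … with a cocone `i_n : HⁿM0 = Hⁿ1 → I` of `M`-algebra morphisms …
    (i : ∀ n : ℕ, TObj H n → I)
    (hialg : ∀ (n : ℕ) (z : M.toFunctor.obj (TObj H n)),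
      i n (aStr l n z) = ζ (M.toFunctor.map (TypeCat.ofHom (i n)) z))
    (hicoc : ∀ (n : ℕ) (x : TObj H n), i (n + 1) (Emb H e n x) = i n x)
    -- … which is colimiting in `Alg(M)` for the initial sequence `M0 → HM0 → H²M0 → …`
    (hcolim : ∀ (B : Type u) (b : M.toFunctor.obj B → B),
      (∀ z, b (M.η.app B z) = z) →
      (∀ z, b (M.μ.app B z) = b (M.toFunctor.map (TypeCat.ofHom b) z)) →
      ∀ g : ∀ n : ℕ, TObj H n → B,
        (∀ (n : ℕ) (z : M.toFunctor.obj (TObj H n)),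
          g n (aStr l n z) = b (M.toFunctor.map (TypeCat.ofHom (g n)) z)) →
        (∀ (n : ℕ) (x : TObj H n), g (n + 1) (Emb H e n x) = g n x) →
        ∃! h : I → B,
          (∀ z, h (ζ z) = b (M.toFunctor.map (TypeCat.ofHom h) z)) ∧ ∀ (n : ℕ) (x : TObj H n), h (i n x) = g n x)
    -- the canonical `M`-algebra map `f : I → L` with `p_n ∘ f ∘ i_n = Hⁿs = id`
    (f : I → L H)
    (hfalg : ∀ z, f (ζ z) = γ (M.toFunctor.map (TypeCat.ofHom f) z))
    (hfi : ∀ (n : ℕ) (x : TObj H n), pr H n (f (i n x)) = x) :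
    -- `L` is Cauchy complete under the ultrametric `dL` …
    (∀ x : ℕ → L H,
      (∀ ε : ℝ, 0 < ε → ∃ N : ℕ, ∀ m n : ℕ, N ≤ m → N ≤ n → dL H (x m) (x n) < ε) →
      ∃ y : L H, ∀ ε : ℝ, 0 < ε → ∃ N : ℕ, ∀ n : ℕ, N ≤ n → dL H (x n) y < ε) ∧
    -- … and the image of `f : I → L` is dense in `L`
    (∀ (x : L H) (ε : ℝ), 0 < ε → ∃ w : I, dL H x (f w) < ε) :=
  final_coalgebra_is_completion_of_initial_algebra_general H I i f hfi

end OnCoalgebrasOverAlgebras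
end

section
/- Let H : Set → Set be an ω^op-continuous endofunctor with a lifting H̃ to Alg(M) given by a distributive law λ : MH → HM, and let (L, ξ) be the final H-coalgebra obtained as the limit of the terminal sequence. Then the cone (ML → MHⁿ1 → Hⁿ1)_{n≥0} given by a_n ∘ M p_n coincides with the cone α_n : ML → Hⁿ1 induced by the H-coalgebra structure λ_L ∘ Mξ on ML; consequently the unique H-coalgebra map γ : ML → L from (ML, λ_L ∘ Mξ) to (L, ξ) satisfies p_n ∘ γ = a_n ∘ M p_n for all n. -/
/-! The cone induced by a coalgebra `c : C → HC` is determined by the recursion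
`α_{n+1} = Hα_n ∘ c`. For the lifted coalgebra `λ_C ∘ Mc` on `MC`, naturality of `λ` shows
that `a_n ∘ Mα_n` obeys this recursion, so it is the induced cone; on `L` the projections `p_n`
are themselves the cone induced by `ξ`. Finally, a coalgebra map `γ` pulls the cone of its
codomain back to the cone of its domain, whence `p_n ∘ γ = a_n ∘ Mp_n`. -/

open CategoryTheory

universe u

namespace OnCoalgebrasOverAlgebras

section Cones

variable {H : Type u ⥤ Type u}

theorem alphaCone_comp_of_isCoalgebraHom {C D : Type u} {c : C → H.obj C} {d : D → H.obj D}
    {h : C → D} (hh : ∀ x, d (h x) = H.map (TypeCat.ofHom h) (c x)) (n : ℕ) :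
    alphaCone H d n ∘ h = alphaCone H c n := by
  induction n with
  | zero => rfl
  | succ n ih =>
    funext x
    change H.map _ (d (h x)) = H.map (TypeCat.ofHom (alphaCone H c n)) (c x)
    rw [hh, ← ih, ← Functor.map_comp_apply]
    rfl

theorem pr_eq_alphaCone {ξ : L H → H.obj (L H)}
    (hξ : ∀ (n : ℕ) (x : L H), pr H (n + 1) x = H.map (TypeCat.ofHom (pr H n)) (ξ x)) (n : ℕ) :
    pr H n = alphaCone H ξ n := by
  induction n with
  | zero => rfl
  | succ n ih => funext x; rw [hξ, ih]; rfl

theorem alphaCone_liftedCoalgebra {M : Monad (Type u)} (l : DistLaw M H) {C : Type u}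
    (c : C → H.obj C) (n : ℕ) :
    alphaCone H (fun w => l.app C (M.toFunctor.map (TypeCat.ofHom c) w)) n
      = aStr l n ∘ M.toFunctor.map (TypeCat.ofHom (alphaCone H c n)) := by
  induction n with
  | zero => rfl
  | succ n ih =>
    funext z
    have map_alphaCone_succ : M.toFunctor.map (TypeCat.ofHom (alphaCone H c (n + 1))) z
        = M.toFunctor.map (H.map (TypeCat.ofHom (alphaCone H c n)))
            (M.toFunctor.map (TypeCat.ofHom c) z) := by
      rw [← Functor.map_comp_apply]; rfl
    change H.map _ _ = H.map _ (l.app _ _)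
    rw [map_alphaCone_succ, l.naturality, ih, ← Functor.map_comp_apply]
    rfl

end Cones

theorem cone_on_ML_coincides_general (M : Monad (Type u)) (H : Type u ⥤ Type u)
    (l : DistLaw M H)
    (ξ : L H → H.obj (L H))
    (hξ : ∀ (n : ℕ) (x : L H), pr H (n + 1) x = H.map (TypeCat.ofHom (pr H n)) (ξ x)) :
    -- the two cones on `ML` coincide
    (∀ (n : ℕ) (z : M.toFunctor.obj (L H)),
      alphaCone H (fun w => l.app (L H) (M.toFunctor.map (TypeCat.ofHom ξ) w)) n z
        = aStr l n (M.toFunctor.map (TypeCat.ofHom (pr H n)) z)) ∧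
    -- hence the unique coalgebra map `γ : ML → L` satisfies `p_n ∘ γ = a_n ∘ Mp_n`
    (∀ γ : M.toFunctor.obj (L H) → L H,
      (∀ z, ξ (γ z) = H.map (TypeCat.ofHom γ) (l.app (L H) (M.toFunctor.map (TypeCat.ofHom ξ) z))) →
      ∀ (n : ℕ) (z : M.toFunctor.obj (L H)),
        pr H n (γ z) = aStr l n (M.toFunctor.map (TypeCat.ofHom (pr H n)) z)) := by
  have cones_eq (n : ℕ) :
      alphaCone H (fun w => l.app (L H) (M.toFunctor.map (TypeCat.ofHom ξ) w)) n
        = aStr l n ∘ M.toFunctor.map (TypeCat.ofHom (pr H n)) := by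
    rw [pr_eq_alphaCone hξ]
    exact alphaCone_liftedCoalgebra l ξ n
  refine ⟨fun n z => congrFun (cones_eq n) z, fun γ hγ n z => ?_⟩
  calc pr H n (γ z) = alphaCone H ξ n (γ z) := by rw [pr_eq_alphaCone hξ]
    _ = _ := congrFun (alphaCone_comp_of_isCoalgebraHom hγ n) z
    _ = _ := congrFun (cones_eq n) z

/-- Let `H` be an `ω^op`-continuous `Set`-endofunctor with a lifting to
`Alg(M)` given by a distributive law `λ : MH → HM`, and let `(L, ξ)` be the final
`H`-coalgebra obtained as the limit of the terminal sequence.  Then the cone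
`(ML → MHⁿ1 → Hⁿ1)` given by `a_n ∘ Mp_n` coincides with the cone `α_n : ML → Hⁿ1`
induced by the `H`-coalgebra structure `λ_L ∘ Mξ` on `ML`; consequently the unique
`H`-coalgebra map `γ : ML → L` from `(ML, λ_L ∘ Mξ)` to `(L, ξ)` satisfies
`p_n ∘ γ = a_n ∘ Mp_n` for all `n`. -/
theorem cone_on_ML_coincides (M : Monad (Type u)) (H : Type u ⥤ Type u)
    [Limits.PreservesLimitsOfShape ℕᵒᵖ H]
    (l : DistLaw M H)
    (ξ : L H → H.obj (L H)) (hbij : Function.Bijective ξ)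
    (hξ : ∀ (n : ℕ) (x : L H), pr H (n + 1) x = H.map (TypeCat.ofHom (pr H n)) (ξ x)) :
    -- the two cones on `ML` coincide
    (∀ (n : ℕ) (z : M.toFunctor.obj (L H)),
      alphaCone H (fun w => l.app (L H) (M.toFunctor.map (TypeCat.ofHom ξ) w)) n z
        = aStr l n (M.toFunctor.map (TypeCat.ofHom (pr H n)) z)) ∧
    -- hence the unique coalgebra map `γ : ML → L` satisfies `p_n ∘ γ = a_n ∘ Mp_n`
    (∀ γ : M.toFunctor.obj (L H) → L H,
      (∀ z, ξ (γ z) = H.map (TypeCat.ofHom γ) (l.app (L H) (M.toFunctor.map (TypeCat.ofHom ξ) z))) →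
      ∀ (n : ℕ) (z : M.toFunctor.obj (L H)),
        pr H n (γ z) = aStr l n (M.toFunctor.map (TypeCat.ofHom (pr H n)) z)) :=
  cone_on_ML_coincides_general M H l ξ hξ

end OnCoalgebrasOverAlgebras
end

section
/- Let H : Set → Set be an ω^op-continuous endofunctor admitting a lifting to Alg(M) via a distributive law λ : MH → HM. Equip each Hⁿ1 and each MHⁿ1 with the discrete topology, L with the initial topology from the cone p_n : L → Hⁿ1, and ML with the initial topology from the cone M p_n : ML → MHⁿ1. Then the final H-coalgebra L is a topological M-algebra: the structure map γ : ML → L is continuous with respect to these topologies. -/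
/-! Because `L` is the limit of the terminal sequence, `γ` is determined levelwise by
`p_n ∘ γ = a_n ∘ M p_n`, which follows by induction on `n` from `γ` being a coalgebra map and
the naturality of `λ`. Thus every `p_n ∘ γ` factors through the discrete space `MHⁿ1`, and is
therefore continuous for the initial topology on `ML`. -/

open CategoryTheory

universe u

namespace OnCoalgebrasOverAlgebras

theorem continuous_of_comp_eq_comp_discrete {ι X Y : Type*} {A B : ι → Type*}
    (q : ∀ i, X → A i) (p : ∀ i, Y → B i) (f : X → Y) (g : ∀ i, A i → B i)
    (hf : ∀ i, p i ∘ f = g i ∘ q i) :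
    @Continuous X Y (⨅ i, TopologicalSpace.induced (q i) ⊥)
      (⨅ i, TopologicalSpace.induced (p i) ⊥) f := by
  let _ : TopologicalSpace X := ⨅ i, TopologicalSpace.induced (q i) ⊥
  refine continuous_iInf_rng.2 fun i => continuous_induced_rng.2 ?_
  let _ : TopologicalSpace (A i) := ⊥
  let _ : TopologicalSpace (B i) := ⊥
  rw [hf i]
  exact continuous_bot.comp (continuous_iInf_dom continuous_induced_dom)

section

variable {M : Monad (Type u)} {H : Type u ⥤ Type u}

theorem ofHom_comp_map_pr {ξ : L H → H.obj (L H)}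
    (hξ : ∀ (n : ℕ) (x : L H), pr H (n + 1) x = H.map (TypeCat.ofHom (pr H n)) (ξ x)) (n : ℕ) :
    TypeCat.ofHom ξ ≫ H.map (TypeCat.ofHom (pr H n)) = TypeCat.ofHom (pr H (n + 1)) :=
  ConcreteCategory.hom_ext _ _ fun x => (hξ n x).symm

theorem pr_comp_eq_aStr_comp (l : DistLaw M H) {ξ : L H → H.obj (L H)}
    (hξ : ∀ (n : ℕ) (x : L H), pr H (n + 1) x = H.map (TypeCat.ofHom (pr H n)) (ξ x))
    {γ : M.toFunctor.obj (L H) → L H}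
    (hγ : ∀ z, ξ (γ z) = H.map (TypeCat.ofHom γ) (l.app (L H) (M.toFunctor.map (TypeCat.ofHom ξ) z)))
    (n : ℕ) : pr H n ∘ γ = aStr l n ∘ M.toFunctor.map (TypeCat.ofHom (pr H n)) := by
  induction n with
  | zero => rfl
  | succ n ih =>
    funext z
    set w := M.toFunctor.map (TypeCat.ofHom ξ) z
    rw [Function.comp_apply, hξ, hγ]
    calc H.map (TypeCat.ofHom (pr H n)) (H.map (TypeCat.ofHom γ) (l.app (L H) w))
        = H.map (TypeCat.ofHom (aStr l n ∘ M.toFunctor.map (TypeCat.ofHom (pr H n))))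
            (l.app (L H) w) := by
          rw [← ih, ← Functor.map_comp_apply]; rfl
      _ = H.map (TypeCat.ofHom (aStr l n))
            (l.app (TObj H n) (M.toFunctor.map (H.map (TypeCat.ofHom (pr H n))) w)) := by
          rw [l.naturality, ← Functor.map_comp_apply]; rfl
      _ = H.map (TypeCat.ofHom (aStr l n))
            (l.app (TObj H n) (M.toFunctor.map (TypeCat.ofHom (pr H (n + 1))) z)) := by
          rw [← Functor.map_comp_apply, ofHom_comp_map_pr hξ]; rfl

end

theorem final_coalgebra_topological_algebra_general (M : Monad (Type u)) (H : Type u ⥤ Type u)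
    (l : DistLaw M H)
    (ξ : L H → H.obj (L H))
    (hξ : ∀ (n : ℕ) (x : L H), pr H (n + 1) x = H.map (TypeCat.ofHom (pr H n)) (ξ x))
    (γ : M.toFunctor.obj (L H) → L H)
    (hγ : ∀ z, ξ (γ z) = H.map (TypeCat.ofHom γ) (l.app (L H) (M.toFunctor.map (TypeCat.ofHom ξ) z))) :
    @Continuous (M.toFunctor.obj (L H)) (L H)
      (⨅ n : ℕ, TopologicalSpace.induced (M.toFunctor.map (TypeCat.ofHom (pr H n)))
        (⊥ : TopologicalSpace (M.toFunctor.obj (TObj H n))))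
      (⨅ n : ℕ, TopologicalSpace.induced (pr H n)
        (⊥ : TopologicalSpace (TObj H n)))
      γ :=
  continuous_of_comp_eq_comp_discrete _ _ γ (aStr l) (pr_comp_eq_aStr_comp l hξ hγ)

/-- Let `H` be an `ω^op`-continuous `Set`-endofunctor admitting a
lifting to `Alg(M)` via a distributive law `λ : MH → HM`.  Equip each `Hⁿ1` and each
`MHⁿ1` with the discrete topology, `L` with the initial topology from the cone
`p_n : L → Hⁿ1`, and `ML` with the initial topology from the cone `Mp_n : ML → MHⁿ1`.
Then the final `H`-coalgebra `L` is a topological `M`-algebra: its structure map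
`γ : ML → L` (the unique `H`-coalgebra map from `(ML, λ_L ∘ Mξ)` to `(L, ξ)`) is
continuous with respect to these topologies. -/
theorem final_coalgebra_topological_algebra (M : Monad (Type u)) (H : Type u ⥤ Type u)
    [Limits.PreservesLimitsOfShape ℕᵒᵖ H]
    (l : DistLaw M H)
    (ξ : L H → H.obj (L H)) (hbij : Function.Bijective ξ)
    (hξ : ∀ (n : ℕ) (x : L H), pr H (n + 1) x = H.map (TypeCat.ofHom (pr H n)) (ξ x))
    (γ : M.toFunctor.obj (L H) → L H)
    (hγ : ∀ z, ξ (γ z) = H.map (TypeCat.ofHom γ) (l.app (L H) (M.toFunctor.map (TypeCat.ofHom ξ) z))) :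
    @Continuous (M.toFunctor.obj (L H)) (L H)
      (⨅ n : ℕ, TopologicalSpace.induced (M.toFunctor.map (TypeCat.ofHom (pr H n)))
        (⊥ : TopologicalSpace (M.toFunctor.obj (TObj H n))))
      (⨅ n : ℕ, TopologicalSpace.induced (pr H n)
        (⊥ : TopologicalSpace (TObj H n)))
      γ :=
  final_coalgebra_topological_algebra_general M H l ξ hξ γ hγ

end OnCoalgebrasOverAlgebras
end

section
/- Let H : Set → Set be an endofunctor admitting a lifting H̃ to Alg(M) via a distributive law λ : MH → HM, and suppose the final H-coalgebra (L, ξ : L → HL) exists. Let γ : ML → L be the unique H-coalgebra map from (ML, λ_L ∘ Mξ) to (L, ξ). Then (L, γ) is an M-algebra, ξ : (L, γ) → (HL, Hγ ∘ λ_L) is an M-algebra morphism, H̃(L, γ) = (HL, Hγ ∘ λ_L), and ((L, γ), ξ) is the final H̃-coalgebra in Alg(M). -/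
open CategoryTheory

universe u

namespace OnCoalgebrasOverAlgebras

/-! The whole proof is finality of `(L, ξ)` applied to the lifted coalgebras `(MC, λ_C ∘ Mc)`.
By the unit, multiplication and naturality laws of `λ`, the maps `η_C`, `μ_C` and `Mf` (for a
coalgebra morphism `f`) are coalgebra morphisms between these.  Hence both sides of each
algebra law for `γ`, and the two candidates `h ∘ c` and `γ ∘ Mh` in the finality part, are
coalgebra morphisms into `(L, ξ)` with a common domain, so they coincide. -/

def IsCoalgHom (H : Type u ⥤ Type u) {C D : Type u} (c : C → H.obj C) (d : D → H.obj D)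
    (h : C → D) : Prop :=
  ∀ z, d (h z) = H.map (TypeCat.ofHom h) (c z)

namespace IsCoalgHom

variable {H : Type u ⥤ Type u} {C D E : Type u} {c : C → H.obj C} {d : D → H.obj D}
  {e : E → H.obj E}

theorem id (c : C → H.obj C) : IsCoalgHom H c c fun x => x := fun z =>
  (H.map_id_apply C (c z)).symm

theorem comp {f : C → D} {g : D → E} (hf : IsCoalgHom H c d f) (hg : IsCoalgHom H d e g) :
    IsCoalgHom H c e (g ∘ f) := fun z => by
  rw [Function.comp_apply, hg, hf]
  exact (H.map_comp_apply (TypeCat.ofHom f) (TypeCat.ofHom g) (c z)).symm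

end IsCoalgHom

namespace DistLaw

variable {M : Monad (Type u)} {H : Type u ⥤ Type u} (l : DistLaw M H)

/-- The `H`-coalgebra structure `λ_C ∘ Mc` on `MC`. -/
def liftCoalg {C : Type u} (c : C → H.obj C) : M.obj C → H.obj (M.obj C) :=
  fun z => l.app C (M.map (TypeCat.ofHom c) z)

/-- The structure map `Ha ∘ λ_X` of the lifting `H̃(X, a)`. -/
def liftAlg {X : Type u} (a : M.obj X → X) : M.obj (H.obj X) → H.obj X :=
  fun w => H.map (TypeCat.ofHom a) (l.app X w)

theorem isCoalgHom_map {C D : Type u} {c : C → H.obj C} {d : D → H.obj D} {f : C → D}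
    (hf : IsCoalgHom H c d f) :
    IsCoalgHom H (l.liftCoalg c) (l.liftCoalg d) (M.map (TypeCat.ofHom f)) := fun z => by
  have hdf : TypeCat.ofHom f ≫ TypeCat.ofHom d = TypeCat.ofHom c ≫ H.map (TypeCat.ofHom f) :=
    ConcreteCategory.hom_ext _ _ fun x => hf x
  calc l.app D (M.map (TypeCat.ofHom d) (M.map (TypeCat.ofHom f) z))
      = l.app D (M.map (H.map (TypeCat.ofHom f)) (M.map (TypeCat.ofHom c) z)) := by
        rw [← Functor.map_comp_apply, ← Functor.map_comp_apply, hdf]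
    _ = H.map (M.map (TypeCat.ofHom f)) (l.app C (M.map (TypeCat.ofHom c) z)) := l.naturality f _

theorem isCoalgHom_unit {C : Type u} (c : C → H.obj C) :
    IsCoalgHom H c (l.liftCoalg c) (M.η.app C) := fun z => by
  calc l.app C (M.map (TypeCat.ofHom c) (M.η.app C z))
      = l.app C (M.η.app (H.obj C) (c z)) := by rw [← NatTrans.naturality_apply]; rfl
    _ = H.map (M.η.app C) (c z) := l.unit C (c z)

theorem isCoalgHom_mul {C : Type u} (c : C → H.obj C) :
    IsCoalgHom H (l.liftCoalg (l.liftCoalg c)) (l.liftCoalg c) (M.μ.app C) := fun z => by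
  calc l.app C (M.map (TypeCat.ofHom c) (M.μ.app C z))
      = l.app C (M.μ.app (H.obj C) (M.map (M.map (TypeCat.ofHom c)) z)) := by
        rw [← NatTrans.naturality_apply]; rfl
    _ = H.map (M.μ.app C) (l.app (M.obj C) (M.map (TypeCat.ofHom (l.app C))
          (M.map (M.map (TypeCat.ofHom c)) z))) := l.mul C _
    _ = H.map (M.μ.app C) (l.liftCoalg (l.liftCoalg c) z) := by
        rw [← Functor.map_comp_apply]; rfl

theorem liftAlg_unit {X : Type u} {a : M.obj X → X} (ha : ∀ x, a (M.η.app X x) = x)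
    (z : H.obj X) : l.liftAlg a (M.η.app (H.obj X) z) = z := by
  have hηa : M.η.app X ≫ TypeCat.ofHom a = 𝟙 X := ConcreteCategory.hom_ext _ _ ha
  calc H.map (TypeCat.ofHom a) (l.app X (M.η.app (H.obj X) z))
      = H.map (M.η.app X ≫ TypeCat.ofHom a) z := by rw [l.unit, Functor.map_comp_apply]
    _ = z := by rw [hηa]; exact H.map_id_apply X z

theorem liftAlg_mul {X : Type u} {a : M.obj X → X}
    (ha : ∀ z, a (M.μ.app X z) = a (M.map (TypeCat.ofHom a) z)) (z : M.obj (M.obj (H.obj X))) :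
    l.liftAlg a (M.μ.app (H.obj X) z) = l.liftAlg a (M.map (TypeCat.ofHom (l.liftAlg a)) z) := by
  have hμa : M.μ.app X ≫ TypeCat.ofHom a = M.map (TypeCat.ofHom a) ≫ TypeCat.ofHom a :=
    ConcreteCategory.hom_ext _ _ ha
  set w := l.app (M.obj X) (M.map (TypeCat.ofHom (l.app X)) z)
  calc H.map (TypeCat.ofHom a) (l.app X (M.μ.app (H.obj X) z))
      = H.map (M.μ.app X ≫ TypeCat.ofHom a) w := by rw [l.mul, Functor.map_comp_apply]
    _ = H.map (TypeCat.ofHom a) (H.map (M.map (TypeCat.ofHom a)) w) := by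
        rw [hμa, Functor.map_comp_apply]
    _ = H.map (TypeCat.ofHom a) (l.app X (M.map (H.map (TypeCat.ofHom a))
          (M.map (TypeCat.ofHom (l.app X)) z))) := by rw [l.naturality]
    _ = l.liftAlg a (M.map (TypeCat.ofHom (l.liftAlg a)) z) := by
        rw [← Functor.map_comp_apply]; rfl

end DistLaw

/-- Let `H` be a `Set`-endofunctor admitting a lifting `H̃` to `Alg(M)`
via a distributive law `λ : MH → HM`, and suppose the final `H`-coalgebra `(L, ξ)`
exists.  Let `γ : ML → L` be the unique `H`-coalgebra map from `(ML, λ_L ∘ Mξ)` to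
`(L, ξ)`.  Then `(L, γ)` is an `M`-algebra, `(HL, Hγ ∘ λ_L)` is an `M`-algebra (the
value `H̃(L, γ)` of the lifting), `ξ : (L, γ) → (HL, Hγ ∘ λ_L)` is an `M`-algebra
morphism, and `((L, γ), ξ)` is the final `H̃`-coalgebra in `Alg(M)`. -/
theorem final_lifted_coalgebra (M : Monad (Type u)) (H : Type u ⥤ Type u)
    (l : DistLaw M H)
    (L : Type u) (ξ : L → H.obj L)
    (hfinal : ∀ (C : Type u) (c : C → H.obj C),
      ∃! h : C → L, ∀ z, ξ (h z) = H.map (TypeCat.ofHom h) (c z))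
    (γ : M.toFunctor.obj L → L)
    (hγ : ∀ z, ξ (γ z) = H.map (TypeCat.ofHom γ) (l.app L (M.toFunctor.map (TypeCat.ofHom ξ) z))) :
    -- `(L, γ)` is an `M`-algebra
    ((∀ z : L, γ (M.η.app L z) = z) ∧
      (∀ z, γ (M.μ.app L z) = γ (M.toFunctor.map (TypeCat.ofHom γ) z))) ∧
    -- `(HL, Hγ ∘ λ_L)` is an `M`-algebra: the value of the lifting `H̃` at `(L, γ)`
    ((∀ z : H.obj L, H.map (TypeCat.ofHom γ) (l.app L (M.η.app (H.obj L) z)) = z) ∧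
      (∀ z, H.map (TypeCat.ofHom γ) (l.app L (M.μ.app (H.obj L) z))
        = H.map (TypeCat.ofHom γ) (l.app L (M.toFunctor.map (TypeCat.ofHom (fun w => H.map (TypeCat.ofHom γ) (l.app L w))) z)))) ∧
    -- `ξ` is an `M`-algebra morphism `(L, γ) → (HL, Hγ ∘ λ_L)`
    (∀ z, ξ (γ z) = H.map (TypeCat.ofHom γ) (l.app L (M.toFunctor.map (TypeCat.ofHom ξ) z))) ∧
    -- `((L, γ), ξ)` is the final `H̃`-coalgebra: for every `M`-algebra `(C, c)` with an
    -- `H`-coalgebra structure `ξC` that is an algebra morphism `(C,c) → H̃(C,c)` there is a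
    -- unique `M`-algebra morphism `C → L` that is also an `H`-coalgebra morphism
    (∀ (C : Type u) (c : M.toFunctor.obj C → C),
      (∀ z, c (M.η.app C z) = z) →
      (∀ z, c (M.μ.app C z) = c (M.toFunctor.map (TypeCat.ofHom c) z)) →
      ∀ ξC : C → H.obj C,
        (∀ z, ξC (c z) = H.map (TypeCat.ofHom c) (l.app C (M.toFunctor.map (TypeCat.ofHom ξC) z))) →
        ∃! h : C → L,
          (∀ z, h (c z) = γ (M.toFunctor.map (TypeCat.ofHom h) z)) ∧
          (∀ z, ξ (h z) = H.map (TypeCat.ofHom h) (ξC z))) := by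
  have hγc : IsCoalgHom H (l.liftCoalg ξ) ξ γ := hγ
  have hunit : ∀ z, γ (M.η.app L z) = z :=
    congrFun ((hfinal L ξ).unique ((l.isCoalgHom_unit ξ).comp hγc) (IsCoalgHom.id ξ))
  have hmul : ∀ z, γ (M.μ.app L z) = γ (M.map (TypeCat.ofHom γ) z) :=
    congrFun ((hfinal _ _).unique ((l.isCoalgHom_mul ξ).comp hγc) ((l.isCoalgHom_map hγc).comp hγc))
  refine ⟨⟨hunit, hmul⟩, ⟨l.liftAlg_unit hunit, l.liftAlg_mul hmul⟩, hγ, ?_⟩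
  intro C c _ _ ξC hξC
  obtain ⟨h, hh, huniq⟩ := hfinal C ξC
  refine ⟨h, ⟨?_, hh⟩, fun g hg => huniq g hg.2⟩
  have hc : IsCoalgHom H (l.liftCoalg ξC) ξC c := hξC
  exact congrFun ((hfinal _ _).unique (hc.comp hh) ((l.isCoalgHom_map hh).comp hγc))

end OnCoalgebrasOverAlgebras
end

section
/- Let H : Set → Set admit a lifting to Alg(M) via a distributive law λ : MH → HM, and suppose M0 = 1 in Alg(M). Then in the terminal sequence 1 ⇄ H1 ⇄ H²1 ⇄ … every connecting map Hⁿt : H^{n+1}1 → Hⁿ1 is a split epimorphism of M-algebras with splitting Hⁿ! : Hⁿ1 → H^{n+1}1 satisfying Hⁿt ∘ Hⁿ! = id, where ! : 1 = M0 → HM0 = H1 is the unique algebra map out of the initial algebra. -/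
open CategoryTheory

universe u

namespace OnCoalgebrasOverAlgebras

/-! The algebra structures `a_n` are the iterates of the lifting `a ↦ Ha ∘ λ`, which sends
associative structures to associative ones and algebra morphisms `f` to algebra morphisms `Hf`.
Hence `Hⁿt` and `Hⁿ!` are algebra morphisms because `t` and `!` are, and `Hⁿt ∘ Hⁿ! = id` is
`Hⁿ` applied to `t ∘ ! = id`. If `M0 = {w}` then `1 ≅ M0` is the free algebra on `∅`, so it is
initial: the algebra map `1 → (X, a)` sends the point to `a (M(∅ → X) w)`. -/

lemma map_ofHom_comp_apply (F : Type u ⥤ Type u) {X Y Z : Type u} (f : X → Y) (g : Y → Z)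
    (x : F.obj X) :
    F.map (TypeCat.ofHom (g ∘ f)) x = F.map (TypeCat.ofHom g) (F.map (TypeCat.ofHom f) x) :=
  F.map_comp_apply (TypeCat.ofHom f) (TypeCat.ofHom g) x

lemma map_ofHom_leftInverse (F : Type u ⥤ Type u) {X Y : Type u} {f : X → Y} {g : Y → X}
    (h : Function.LeftInverse g f) :
    Function.LeftInverse (F.map (TypeCat.ofHom g)) (F.map (TypeCat.ofHom f)) := fun x => by
  rw [← map_ofHom_comp_apply, h.comp_eq_id]
  exact F.map_id_apply X x

section Algebras

variable {M : Monad (Type u)}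

def IsAlgHom {X Y : Type u} (a : M.obj X → X) (b : M.obj Y → Y) (f : X → Y) : Prop :=
  ∀ z, f (a z) = b (M.map (TypeCat.ofHom f) z)

def IsAssoc {X : Type u} (a : M.obj X → X) : Prop :=
  ∀ v, a (M.μ.app X v) = a (M.map (TypeCat.ofHom a) v)

lemma IsAlgHom.comp {X Y Z : Type u} {a : M.obj X → X} {b : M.obj Y → Y} {c : M.obj Z → Z}
    {f : X → Y} {g : Y → Z} (hg : IsAlgHom b c g) (hf : IsAlgHom a b f) :
    IsAlgHom a c (g ∘ f) := fun z => by
  rw [Function.comp_apply, hf, hg, ← map_ofHom_comp_apply]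

lemma isAlgHom_comp_map {X Y : Type u} {a : M.obj X → X} (ha : IsAssoc a) (f : Y → X) :
    IsAlgHom (M.μ.app Y) a (a ∘ M.map (TypeCat.ofHom f)) := fun v =>
  calc a (M.map (TypeCat.ofHom f) (M.μ.app Y v))
      = a (M.μ.app X (M.map (M.map (TypeCat.ofHom f)) v)) :=
        congrArg a (NatTrans.naturality_apply M.μ (TypeCat.ofHom f) v).symm
    _ = a (M.map (TypeCat.ofHom a) (M.map (M.map (TypeCat.ofHom f)) v)) := ha _
    _ = a (M.map (TypeCat.ofHom (a ∘ M.map (TypeCat.ofHom f))) v) :=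
        congrArg a (map_ofHom_comp_apply M.toFunctor _ a v).symm

lemma IsAlgHom.apply_eq_of_punit {X : Type u} {a : M.obj X → X} {e : PUnit.{u + 1} → X}
    (he : IsAlgHom (fun _ => PUnit.unit) a e) (w : M.obj PEmpty) :
    e PUnit.unit = a (M.map (TypeCat.ofHom PEmpty.elim) w) := by
  have h := he (M.map (TypeCat.ofHom fun _ => PUnit.unit) w)
  rwa [← map_ofHom_comp_apply, Subsingleton.elim (e ∘ _) PEmpty.elim] at h

theorem existsUnique_isAlgHom_punit [Subsingleton (M.obj PEmpty)] [Nonempty (M.obj PEmpty)]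
    {X : Type u} {a : M.obj X → X} (ha : IsAssoc a) :
    ∃! e : PUnit.{u + 1} → X, IsAlgHom (fun _ => PUnit.unit) a e := by
  obtain ⟨w⟩ := ‹Nonempty (M.obj PEmpty)›
  have hw : IsAlgHom (fun _ => PUnit.unit) (M.μ.app PEmpty) (fun _ => w) :=
    fun _ => Subsingleton.elim _ _
  exact ⟨_, (isAlgHom_comp_map ha PEmpty.elim).comp hw,
    fun e he => funext fun _ => he.apply_eq_of_punit w⟩

end Algebras

section Lifting

variable {M : Monad (Type u)} {H : Type u ⥤ Type u} (l : DistLaw M H)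

def DistLaw.liftStr {X : Type u} (a : M.obj X → X) : M.obj (H.obj X) → H.obj X :=
  fun z => H.map (TypeCat.ofHom a) (l.app X z)

lemma DistLaw.isAlgHom_map_liftStr {X Y : Type u} {a : M.obj X → X} {b : M.obj Y → Y}
    {f : X → Y} (hf : IsAlgHom a b f) :
    IsAlgHom (l.liftStr a) (l.liftStr b) (H.map (TypeCat.ofHom f)) := fun z =>
  calc H.map (TypeCat.ofHom f) (H.map (TypeCat.ofHom a) (l.app X z))
      = H.map (TypeCat.ofHom (f ∘ a)) (l.app X z) := (map_ofHom_comp_apply H a f _).symm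
    _ = H.map (TypeCat.ofHom (b ∘ M.map (TypeCat.ofHom f))) (l.app X z) := by
        rw [show f ∘ a = b ∘ M.map (TypeCat.ofHom f) from funext hf]
    _ = H.map (TypeCat.ofHom b) (H.map (M.map (TypeCat.ofHom f)) (l.app X z)) :=
        map_ofHom_comp_apply H _ b _
    _ = H.map (TypeCat.ofHom b) (l.app Y (M.map (H.map (TypeCat.ofHom f)) z)) := by
        rw [l.naturality]

lemma DistLaw.isAssoc_liftStr {X : Type u} {a : M.obj X → X} (ha : IsAssoc a) :
    IsAssoc (l.liftStr a) := fun v =>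
  let w := l.app (M.obj X) (M.map (TypeCat.ofHom (l.app X)) v)
  calc H.map (TypeCat.ofHom a) (l.app X (M.μ.app (H.obj X) v))
      = H.map (TypeCat.ofHom a) (H.map (M.μ.app X) w) := by rw [l.mul]
    _ = H.map (TypeCat.ofHom (a ∘ M.μ.app X)) w := (map_ofHom_comp_apply H _ a w).symm
    _ = H.map (TypeCat.ofHom (a ∘ M.map (TypeCat.ofHom a))) w := by
        rw [show a ∘ M.μ.app X = a ∘ M.map (TypeCat.ofHom a) from funext ha]
    _ = H.map (TypeCat.ofHom a) (H.map (M.map (TypeCat.ofHom a)) w) :=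
        map_ofHom_comp_apply H _ a w
    _ = H.map (TypeCat.ofHom a)
          (l.app X (M.map (H.map (TypeCat.ofHom a)) (M.map (TypeCat.ofHom (l.app X)) v))) := by
        rw [l.naturality]
    _ = H.map (TypeCat.ofHom a) (l.app X (M.map (TypeCat.ofHom (l.liftStr a)) v)) :=
        congrArg _ (congrArg _ (map_ofHom_comp_apply M.toFunctor (l.app X) _ v).symm)

end Lifting

section TerminalSequence

variable {M : Monad (Type u)} {H : Type u ⥤ Type u}

lemma isAssoc_aStr (l : DistLaw M H) : ∀ n, IsAssoc (aStr l n)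
  | 0 => fun _ => rfl
  | n + 1 => l.isAssoc_liftStr (isAssoc_aStr l n)

lemma isAlgHom_tMap (l : DistLaw M H) : ∀ n, IsAlgHom (aStr l (n + 1)) (aStr l n) (TMap H n)
  | 0 => fun _ => rfl
  | n + 1 => l.isAlgHom_map_liftStr (isAlgHom_tMap l n)

lemma isAlgHom_emb (l : DistLaw M H) {e : TObj H 0 → TObj H 1}
    (he : IsAlgHom (aStr l 0) (aStr l 1) e) : ∀ n, IsAlgHom (aStr l n) (aStr l (n + 1)) (Emb H e n)
  | 0 => he
  | n + 1 => l.isAlgHom_map_liftStr (isAlgHom_emb l he n)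

lemma leftInverse_tMap_emb (e : TObj H 0 → TObj H 1) :
    ∀ n, Function.LeftInverse (TMap H n) (Emb H e n)
  | 0 => fun _ => rfl
  | n + 1 => map_ofHom_leftInverse H (leftInverse_tMap_emb e n)

end TerminalSequence

/-- Let `H` admit a lifting to `Alg(M)` via a distributive law
`λ : MH → HM`, and suppose `M0 = 1` in `Alg(M)` (the free algebra on the empty set is
a singleton).  Then there is a unique `M`-algebra map `! : 1 = M0 → HM0 = H1`, and in
the terminal sequence every connecting map `Hⁿt : H^{n+1}1 → Hⁿ1` is a split
epimorphism of `M`-algebras with splitting `Hⁿ!` satisfying `Hⁿt ∘ Hⁿ! = id`. -/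
theorem terminal_sequence_split (M : Monad (Type u)) (H : Type u ⥤ Type u)
    (l : DistLaw M H)
    (h0 : Subsingleton (M.toFunctor.obj PEmpty))
    (h1 : Nonempty (M.toFunctor.obj PEmpty)) :
    -- the unique algebra map `! : 1 → H1`
    (∃! e : TObj H 0 → TObj H 1,
      ∀ z, e (aStr l 0 z) = aStr l 1 (M.toFunctor.map (TypeCat.ofHom e) z)) ∧
    (∀ e : TObj H 0 → TObj H 1,
      (∀ z, e (aStr l 0 z) = aStr l 1 (M.toFunctor.map (TypeCat.ofHom e) z)) →
      ∀ n : ℕ,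
        -- `Hⁿt ∘ Hⁿ! = id`, so `Hⁿt` is split epi with splitting `Hⁿ!`
        (∀ x : TObj H n, TMap H n (Emb H e n x) = x) ∧
        -- `Hⁿ!` is an `M`-algebra morphism
        (∀ z : M.toFunctor.obj (TObj H n),
          Emb H e n (aStr l n z) = aStr l (n + 1) (M.toFunctor.map (TypeCat.ofHom (Emb H e n)) z)) ∧
        -- `Hⁿt` is an `M`-algebra morphism
        (∀ z : M.toFunctor.obj (TObj H (n + 1)),
          TMap H n (aStr l (n + 1) z) = aStr l n (M.toFunctor.map (TypeCat.ofHom (TMap H n)) z))) := by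
  have := h0
  have := h1
  exact ⟨existsUnique_isAlgHom_punit (isAssoc_aStr l 1),
    fun e he n => ⟨leftInverse_tMap_emb e n, isAlgHom_emb l he n, isAlgHom_tMap l n⟩⟩

end OnCoalgebrasOverAlgebras
end
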